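/- arXiv:2207.13887 — 6 statements merged into one kernel-verified Lean document; each statement's English description precedes it below -/
import Mathlib

section
/- Let F : ℝ^d → ℝ be differentiable and β-smooth, let w ∈ ℝ^d, let g = ∇F(w), let k ∈ [0,1], and let H be a symmetric real d×d matrix with αI ≼ H ≼ βI for reals 0 < α ≤ β. If w' = w − (α^k/β) H^{−k} g, then F(w') − F(w) ≤ −(α^k/(2β^{k+1})) ‖g‖². -/
open scoped RealInnerProductSpace

/-- The spectral power `H^s` of a symmetric real matrix `H`, obtained by raising
each eigenvalue in its spectral decomposition to the real power `s`. -/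
noncomputable def specPow {d : ℕ} (H : Matrix (Fin d) (Fin d) ℝ) (hH : H.IsHermitian)
    (s : ℝ) : Matrix (Fin d) (Fin d) ℝ :=
  (hH.eigenvectorUnitary : Matrix (Fin d) (Fin d) ℝ) *
    Matrix.diagonal (fun i => hH.eigenvalues i ^ s) *
    star (hH.eigenvectorUnitary : Matrix (Fin d) (Fin d) ℝ)

/-!
By β-smoothness, `F (w + u) ≤ F w + ⟪g, u⟫ + β / 2 * ‖u‖ ^ 2`. In an orthonormal eigenbasis of `H`
the step `u = -η • H^(-k) g`, `η = α^k / β`, scales the `i`-th coordinate of `g` by `-η λᵢ^(-k)`.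
Since `α ≤ λᵢ ≤ β`, we have `β η λᵢ^(-k) = (α / λᵢ)^k ≤ 1` and `λᵢ^(-k) ≥ β^(-k)`, so the quadratic
bound loses at least `η β^(-k) / 2 = α^k / (2 β^(k+1))` times the square of each coordinate.
-/

open Set

theorem le_add_inner_gradient_add_half_mul_norm_sq {E : Type*} [NormedAddCommGroup E]
    [InnerProductSpace ℝ E] [CompleteSpace E] {F : E → ℝ} (hF : Differentiable ℝ F) {β : ℝ}
    (hβ : ∀ u v, ‖gradient F u - gradient F v‖ ≤ β * ‖u - v‖) (w u : E) :
    F (w + u) ≤ F w + ⟪gradient F w, u⟫ + β / 2 * ‖u‖ ^ 2 := by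
  set g := gradient F w
  let φ : ℝ → ℝ := fun t => F (w + t • u) - t * ⟪g, u⟫ - β / 2 * ‖u‖ ^ 2 * t ^ 2
  have hφ (t : ℝ) : HasDerivAt φ (⟪gradient F (w + t • u) - g, u⟫ - β * ‖u‖ ^ 2 * t) t := by
    have hline := ((hasDerivAt_id t).smul_const u).const_add w
    have hFt := (hF (w + t • u)).hasGradientAt.hasFDerivAt.comp_hasDerivAt t hline
    have := (hFt.sub ((hasDerivAt_id t).mul_const ⟪g, u⟫)).sub
      ((hasDerivAt_pow 2 t).const_mul (β / 2 * ‖u‖ ^ 2))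
    refine this.congr_deriv ?_
    simp only [InnerProductSpace.toDual_apply_apply, one_smul, inner_sub_left]
    ring
  have hφ' (t : ℝ) (ht : t ∈ interior (Icc (0 : ℝ) 1)) :
      ⟪gradient F (w + t • u) - g, u⟫ - β * ‖u‖ ^ 2 * t ≤ 0 := by
    rw [interior_Icc] at ht
    have := calc ⟪gradient F (w + t • u) - g, u⟫
        ≤ ‖gradient F (w + t • u) - g‖ * ‖u‖ := real_inner_le_norm _ _
      _ ≤ β * ‖t • u‖ * ‖u‖ := by gcongr; simpa using hβ (w + t • u) w
      _ = β * ‖u‖ ^ 2 * t := by rw [norm_smul, Real.norm_of_nonneg ht.1.le]; ring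
    linarith
  have hanti := antitoneOn_of_hasDerivWithinAt_nonpos (convex_Icc 0 1)
    (fun t _ => (hφ t).continuousAt.continuousWithinAt) (fun t _ => (hφ t).hasDerivWithinAt) hφ'
  have := hanti (left_mem_Icc.2 zero_le_one) (right_mem_Icc.2 zero_le_one) zero_le_one
  norm_num [φ] at this
  linarith

section Diagonal

variable {ι E : Type*} [Fintype ι] [NormedAddCommGroup E] [InnerProductSpace ℝ E]
  (B : OrthonormalBasis ι ℝ E) {T : E →ₗ[ℝ] E} {t : ι → ℝ}

theorem OrthonormalBasis.repr_apply_of_apply_eq_smul (hT : ∀ i, T (B i) = t i • B i)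
    (x : E) (i : ι) : B.repr (T x) i = t i * B.repr x i := by
  have : T x = ∑ j, (t j * B.repr x j) • B j := by
    conv_lhs => rw [← B.sum_repr x]
    simp only [map_sum, map_smul, hT, smul_smul, mul_comm]
  rw [this, B.sum_repr_symm (WithLp.toLp 2 fun j => t j * B.repr x j)]
  simp

theorem OrthonormalBasis.inner_neg_smul_add_norm_sq_le (hT : ∀ i, T (B i) = t i • B i)
    {η β c : ℝ} (hc : ∀ i, -(η * t i) + β / 2 * (η * t i) ^ 2 ≤ -c) (x : E) :
    ⟪x, -(η • T x)⟫ + β / 2 * ‖-(η • T x)‖ ^ 2 ≤ -c * ‖x‖ ^ 2 := by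
  rw [← B.repr.inner_map_map, ← B.repr.norm_map, ← B.repr.norm_map,
    EuclideanSpace.real_norm_sq_eq, EuclideanSpace.real_norm_sq_eq, PiLp.inner_apply,
    Finset.mul_sum, Finset.mul_sum, ← Finset.sum_add_distrib]
  refine Finset.sum_le_sum fun i _ => ?_
  simp only [map_neg, map_smul, PiLp.neg_apply, PiLp.smul_apply, smul_eq_mul,
    B.repr_apply_of_apply_eq_smul hT, RCLike.inner_apply, conj_trivial]
  nlinarith [mul_le_mul_of_nonneg_right (hc i) (sq_nonneg (B.repr x i))]

end Diagonal

theorem Matrix.IsHermitian.toEuclideanLin_eigenvectorBasis {n : Type*} [Fintype n]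
    [DecidableEq n] {A : Matrix n n ℝ} (hA : A.IsHermitian) (i : n) :
    Matrix.toEuclideanLin A (hA.eigenvectorBasis i)
      = hA.eigenvalues i • hA.eigenvectorBasis i := by
  ext1
  simp [Matrix.toLpLin_apply, hA.mulVec_eigenvectorBasis]

theorem Matrix.IsHermitian.eigenvalues_mem_Icc {n : Type*} [Fintype n] [DecidableEq n]
    {A : Matrix n n ℝ} (hA : A.IsHermitian) {a b : ℝ}
    (h : ∀ x : EuclideanSpace ℝ n, a * ‖x‖ ^ 2 ≤ ⟪x, Matrix.toEuclideanLin A x⟫ ∧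
      ⟪x, Matrix.toEuclideanLin A x⟫ ≤ b * ‖x‖ ^ 2) (i : n) :
    hA.eigenvalues i ∈ Icc a b := by
  simpa [hA.toEuclideanLin_eigenvectorBasis, real_inner_smul_right,
    hA.eigenvectorBasis.orthonormal.1 i] using h (hA.eigenvectorBasis i)

theorem toEuclideanLin_specPow_eigenvectorBasis {d : ℕ} {H : Matrix (Fin d) (Fin d) ℝ}
    (hH : H.IsHermitian) (s : ℝ) (i : Fin d) :
    Matrix.toEuclideanLin (specPow H hH s) (hH.eigenvectorBasis i)
      = hH.eigenvalues i ^ s • hH.eigenvectorBasis i := by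
  rw [Matrix.toLpLin_apply, specPow, ← Matrix.mulVec_mulVec, ← Matrix.mulVec_mulVec,
    hH.star_eigenvectorUnitary_mulVec, Matrix.diagonal_mulVec_single, mul_one]
  ext j
  simp [Matrix.mulVec_single, mul_comm]

theorem neg_mul_add_half_mul_sq_le {η β t s : ℝ} (hη : 0 ≤ η) (hs : 0 ≤ s) (hst : s ≤ t)
    (ht : β * η * t ≤ 1) : -(η * t) + β / 2 * (η * t) ^ 2 ≤ -(η * s / 2) := by
  nlinarith [mul_nonneg (mul_nonneg hη (hs.trans hst)) (sub_nonneg.2 ht),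
    mul_le_mul_of_nonneg_left hst hη]

theorem neg_mul_rpow_add_half_mul_sq_le {α β k μ : ℝ} (hα : 0 < α) (hk : 0 ≤ k)
    (hαμ : α ≤ μ) (hμβ : μ ≤ β) :
    -(α ^ k / β * μ ^ (-k)) + β / 2 * (α ^ k / β * μ ^ (-k)) ^ 2
      ≤ -(α ^ k / (2 * β ^ (k + 1))) := by
  have hμ : 0 < μ := hα.trans_le hαμ
  have hβ : 0 < β := hμ.trans_le hμβ
  have hstep : β * (α ^ k / β) * μ ^ (-k) ≤ 1 := by
    rw [mul_div_cancel₀ _ hβ.ne', Real.rpow_neg hμ.le, ← div_eq_mul_inv,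
      ← Real.div_rpow hα.le hμ.le]
    exact Real.rpow_le_one (div_nonneg hα.le hμ.le) ((div_le_one hμ).2 hαμ) hk
  have := neg_mul_add_half_mul_sq_le (by positivity) (by positivity)
    (Real.rpow_le_rpow_of_nonpos hμ hμβ (neg_nonpos.2 hk)) hstep
  convert this using 2
  rw [Real.rpow_neg hβ.le, Real.rpow_add hβ, Real.rpow_one]
  field_simp

theorem descent_of_preconditioned_step_general {d : ℕ} (F : EuclideanSpace ℝ (Fin d) → ℝ)
    (hdiff : Differentiable ℝ F) (α β k : ℝ) (hα : 0 < α)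
    (hk0 : 0 ≤ k)
    (hsmooth : ∀ u v : EuclideanSpace ℝ (Fin d),
      ‖gradient F u - gradient F v‖ ≤ β * ‖u - v‖)
    (H : Matrix (Fin d) (Fin d) ℝ) (hH : H.IsHermitian)
    (hbound : ∀ x : EuclideanSpace ℝ (Fin d),
      α * ‖x‖ ^ 2 ≤ ⟪x, Matrix.toEuclideanLin H x⟫ ∧
      ⟪x, Matrix.toEuclideanLin H x⟫ ≤ β * ‖x‖ ^ 2)
    (w w' g : EuclideanSpace ℝ (Fin d)) (hg : g = gradient F w)
    (hw' : w' = w - (α ^ k / β) • Matrix.toEuclideanLin (specPow H hH (-k)) g) :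
    F w' - F w ≤ -(α ^ k / (2 * β ^ (k + 1))) * ‖g‖ ^ 2 := by
  have hdescent := le_add_inner_gradient_add_half_mul_norm_sq hdiff hsmooth w
    (-((α ^ k / β) • Matrix.toEuclideanLin (specPow H hH (-k)) g))
  have hdecrease := hH.eigenvectorBasis.inner_neg_smul_add_norm_sq_le
    (toEuclideanLin_specPow_eigenvectorBasis hH (-k))
    (fun i => neg_mul_rpow_add_half_mul_sq_le hα hk0 (hH.eigenvalues_mem_Icc hbound i).1
      (hH.eigenvalues_mem_Icc hbound i).2) g
  rw [← sub_eq_add_neg, ← hw', ← hg] at hdescent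
  linarith

/-- Let `F : ℝ^d → ℝ` be differentiable and `β`-smooth, `w ∈ ℝ^d`, `g = ∇F(w)`,
`k ∈ [0,1]`, and `H` a symmetric matrix with `αI ≼ H ≼ βI`, `0 < α ≤ β`. If
`w' = w − (α^k/β) H^{−k} g`, then `F(w') − F(w) ≤ −(α^k/(2β^{k+1})) ‖g‖²`. -/
theorem descent_of_preconditioned_step {d : ℕ} (F : EuclideanSpace ℝ (Fin d) → ℝ)
    (hdiff : Differentiable ℝ F) (α β k : ℝ) (hα : 0 < α) (hαβ : α ≤ β)
    (hk0 : 0 ≤ k) (hk1 : k ≤ 1)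
    (hsmooth : ∀ u v : EuclideanSpace ℝ (Fin d),
      ‖gradient F u - gradient F v‖ ≤ β * ‖u - v‖)
    (H : Matrix (Fin d) (Fin d) ℝ) (hH : H.IsHermitian)
    (hbound : ∀ x : EuclideanSpace ℝ (Fin d),
      α * ‖x‖ ^ 2 ≤ ⟪x, Matrix.toEuclideanLin H x⟫ ∧
      ⟪x, Matrix.toEuclideanLin H x⟫ ≤ β * ‖x‖ ^ 2)
    (w w' g : EuclideanSpace ℝ (Fin d)) (hg : g = gradient F w)
    (hw' : w' = w - (α ^ k / β) • Matrix.toEuclideanLin (specPow H hH (-k)) g) :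
    F w' - F w ≤ -(α ^ k / (2 * β ^ (k + 1))) * ‖g‖ ^ 2 :=
  descent_of_preconditioned_step_general F hdiff α β k hα hk0 hsmooth H hH hbound w w' g hg hw'
end

section
/- (Theorem 4.1, Newton's method on AdaCore coresets, per-iteration form.) Let 0 < α ≤ β and ε ≥ 0. Let L : ℝ^d → ℝ (the full loss) and F : ℝ^d → ℝ (the weighted coreset loss) be twice continuously differentiable, with F β-smooth, and suppose at a point w ∈ ℝ^d the Hessians H_L = ∇²L(w) and H_F = ∇²F(w) are symmetric and satisfy αI ≼ H_L ≼ βI and αI ≼ H_F ≼ βI. Suppose the coreset approximates the preconditioned full gradient with error at most ε, i.e. ‖H_L⁻¹∇L(w) − H_F⁻¹∇F(w)‖ ≤ ε, and suppose ‖∇L(w)‖ ≥ βε. Then the Newton step on the coreset loss with learning rate α/β, namely w' = w − (α/β) H_F⁻¹ ∇F(w), satisfies F(w') − F(w) ≤ −(α³/(2β⁴)) (‖∇L(w)‖ − βε)². -/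
/-! The coreset Newton direction `p = H_F⁻¹ ∇F(w)` satisfies `⟪∇F(w), p⟫ = ⟪p, H_F p⟫ ≥ α ‖p‖²`,
so the descent lemma for the `β`-smooth `F` shows that the step `-(α/β) p` decreases `F` by at
least `α²/(2β) ‖p‖²`. Since `‖H_L‖ ≤ β`, the full Newton direction `H_L⁻¹ ∇L(w)` has norm at least
`‖∇L(w)‖ / β`, and `p` lies within `ε` of it, whence `β ‖p‖ ≥ ‖∇L(w)‖ - β ε ≥ 0`. -/

open scoped RealInnerProductSpace

section Descent

variable {E : Type*} [NormedAddCommGroup E] [InnerProductSpace ℝ E] [CompleteSpace E]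
  {F : E → ℝ} {β : ℝ}

theorem le_add_inner_gradient_add_sq_of_lipschitz_gradient (hF : Differentiable ℝ F)
    (hsmooth : ∀ u v, ‖gradient F u - gradient F v‖ ≤ β * ‖u - v‖) (u v : E) :
    F (u + v) ≤ F u + ⟪gradient F u, v⟫ + β / 2 * ‖v‖ ^ 2 := by
  -- `φ` is antitone on `[0, ∞)`: its derivative is `⟪∇F(u + t v) - ∇F u, v⟫ - β t ‖v‖² ≤ 0`.
  set φ : ℝ → ℝ := fun t ↦ F (u + t • v) - t * ⟪gradient F u, v⟫ - β / 2 * t ^ 2 * ‖v‖ ^ 2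
  have hφ : ∀ t, HasDerivAt φ
      (⟪gradient F (u + t • v) - gradient F u, v⟫ - β * t * ‖v‖ ^ 2) t := by
    intro t
    have hline : HasDerivAt (fun s : ℝ ↦ u + s • v) v t := by
      simpa using ((hasDerivAt_id t).smul_const v).const_add u
    have hFline := (hF (u + t • v)).hasGradientAt.hasFDerivAt.comp_hasDerivAt t hline
    refine ((hFline.sub ((hasDerivAt_id' t).mul_const ⟪gradient F u, v⟫)).sub
      (((hasDerivAt_pow 2 t).const_mul (β / 2)).mul_const (‖v‖ ^ 2))).congr_deriv ?_
    rw [InnerProductSpace.toDual_apply_apply, inner_sub_left]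
    simp only [one_mul, Nat.cast_ofNat, Nat.add_one_sub_one, pow_one]
    ring
  have hφ' : ∀ t ∈ interior (Set.Ici (0 : ℝ)),
      ⟪gradient F (u + t • v) - gradient F u, v⟫ - β * t * ‖v‖ ^ 2 ≤ 0 := by
    intro t ht
    rw [interior_Ici] at ht
    have ht : 0 ≤ t := le_of_lt ht
    rw [sub_nonpos]
    calc ⟪gradient F (u + t • v) - gradient F u, v⟫
        ≤ ‖gradient F (u + t • v) - gradient F u‖ * ‖v‖ := real_inner_le_norm _ _
      _ ≤ β * ‖t • v‖ * ‖v‖ := by gcongr; simpa using hsmooth (u + t • v) u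
      _ = β * t * ‖v‖ ^ 2 := by rw [norm_smul, Real.norm_of_nonneg ht]; ring
  have hanti : AntitoneOn φ (Set.Ici 0) :=
    antitoneOn_of_hasDerivWithinAt_nonpos (convex_Ici 0)
      (fun t _ ↦ (hφ t).continuousAt.continuousWithinAt)
      (fun t _ ↦ (hφ t).hasDerivWithinAt) hφ'
  have h01 := hanti (Set.mem_Ici.mpr le_rfl) (Set.mem_Ici.mpr zero_le_one) zero_le_one
  simp only [φ, one_smul, zero_smul, add_zero, one_pow, one_mul, mul_one, zero_mul,
    ne_eq, OfNat.ofNat_ne_zero, not_false_eq_true, zero_pow, mul_zero, sub_zero] at h01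
  linarith

theorem sub_le_neg_mul_sq_of_le_inner_gradient (hF : Differentiable ℝ F)
    (hsmooth : ∀ u v, ‖gradient F u - gradient F v‖ ≤ β * ‖u - v‖) (hβ : 0 < β)
    {α : ℝ} (hα : 0 ≤ α) {w p : E} (hp : α * ‖p‖ ^ 2 ≤ ⟪gradient F w, p⟫) :
    F (w - (α / β) • p) - F w ≤ -(α ^ 2 / (2 * β)) * ‖p‖ ^ 2 := by
  have h := le_add_inner_gradient_add_sq_of_lipschitz_gradient hF hsmooth w (-((α / β) • p))
  rw [← sub_eq_add_neg, inner_neg_right, real_inner_smul_right, norm_neg, norm_smul,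
    Real.norm_of_nonneg (by positivity)] at h
  have hstep : α / β * (α * ‖p‖ ^ 2) ≤ α / β * ⟪gradient F w, p⟫ := by gcongr
  have hval : -(α / β * (α * ‖p‖ ^ 2)) + β / 2 * (α / β * ‖p‖) ^ 2
      = -(α ^ 2 / (2 * β)) * ‖p‖ ^ 2 := by
    field_simp
    ring
  linarith

end Descent

theorem ContinuousLinearMap.opNorm_le_of_abs_inner_self_le
    {E : Type*} [NormedAddCommGroup E] [InnerProductSpace ℝ E]
    {T : E →L[ℝ] E} (hT : T.IsSymmetric) {β : ℝ} (hβ : 0 ≤ β)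
    (h : ∀ x, |⟪T x, x⟫| ≤ β * ‖x‖ ^ 2) : ‖T‖ ≤ β := by
  rw [T.norm_eq_iSup_rayleighQuotient hT]
  refine ciSup_le fun x ↦ ?_
  rw [rayleighQuotient, reApplyInnerSelf_apply, RCLike.re_to_real, abs_div, abs_sq]
  exact div_le_of_le_mul₀ (sq_nonneg _) hβ (h x)

namespace Matrix

variable {n : Type*} [Fintype n] [DecidableEq n] {H : Matrix n n ℝ} {α β : ℝ}

theorem isUnit_of_mul_sq_le_inner_toEuclideanLin (hα : 0 < α)
    (h : ∀ x, α * ‖x‖ ^ 2 ≤ ⟪x, toEuclideanLin H x⟫) : IsUnit H := by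
  rw [← mulVec_injective_iff_isUnit]
  intro x y hxy
  have hz := h (WithLp.toLp 2 (x - y))
  rw [toLpLin_toLp, toLin'_apply, mulVec_sub, hxy, sub_self, WithLp.toLp_zero,
    inner_zero_right] at hz
  have : WithLp.toLp 2 (x - y) = 0 := by
    by_contra hne
    have := mul_pos hα (pow_pos (norm_pos_iff.mpr hne) 2)
    linarith
  simpa [sub_eq_zero] using this

theorem toEuclideanLin_apply_toEuclideanLin_inv (hH : IsUnit H) (x : EuclideanSpace ℝ n) :
    toEuclideanLin H (toEuclideanLin H⁻¹ x) = x := by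
  rw [← LinearMap.comp_apply, ← toLpLin_mul_same,
    mul_nonsing_inv _ ((isUnit_iff_isUnit_det H).mp hH), toLpLin_one, LinearMap.id_apply]

theorem norm_toEuclideanLin_apply_le (hH : H.IsHermitian) (hβ : 0 ≤ β)
    (h : ∀ x, 0 ≤ ⟪x, toEuclideanLin H x⟫ ∧ ⟪x, toEuclideanLin H x⟫ ≤ β * ‖x‖ ^ 2)
    (x : EuclideanSpace ℝ n) : ‖toEuclideanLin H x‖ ≤ β * ‖x‖ := by
  have hnorm : ‖toEuclideanCLM (𝕜 := ℝ) H‖ ≤ β := by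
    refine ContinuousLinearMap.opNorm_le_of_abs_inner_self_le
      (isSymmetric_toEuclideanLin_iff.mpr hH) hβ fun y ↦ ?_
    rw [real_inner_comm]
    exact (abs_of_nonneg (h y).1).trans_le (h y).2
  calc ‖toEuclideanCLM (𝕜 := ℝ) H x‖ ≤ ‖toEuclideanCLM (𝕜 := ℝ) H‖ * ‖x‖ :=
        (toEuclideanCLM (𝕜 := ℝ) H).le_opNorm x
    _ ≤ β * ‖x‖ := by gcongr

end Matrix

theorem newton_descent_on_coreset_general {d : ℕ} (L F : EuclideanSpace ℝ (Fin d) → ℝ)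
    (α β ε : ℝ) (hα : 0 < α) (hαβ : α ≤ β)
    (hF : ContDiff ℝ 2 F)
    (hsmooth : ∀ u v : EuclideanSpace ℝ (Fin d),
      ‖gradient F u - gradient F v‖ ≤ β * ‖u - v‖)
    (w : EuclideanSpace ℝ (Fin d))
    (HL HF : Matrix (Fin d) (Fin d) ℝ) (hHL : HL.IsHermitian)
    (hboundHL : ∀ x : EuclideanSpace ℝ (Fin d),
      α * ‖x‖ ^ 2 ≤ ⟪x, Matrix.toEuclideanLin HL x⟫ ∧
      ⟪x, Matrix.toEuclideanLin HL x⟫ ≤ β * ‖x‖ ^ 2)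
    (hboundHF : ∀ x : EuclideanSpace ℝ (Fin d),
      α * ‖x‖ ^ 2 ≤ ⟪x, Matrix.toEuclideanLin HF x⟫ ∧
      ⟪x, Matrix.toEuclideanLin HF x⟫ ≤ β * ‖x‖ ^ 2)
    (herr : ‖Matrix.toEuclideanLin HL⁻¹ (gradient L w) -
      Matrix.toEuclideanLin HF⁻¹ (gradient F w)‖ ≤ ε)
    (hbig : β * ε ≤ ‖gradient L w‖)
    (w' : EuclideanSpace ℝ (Fin d))
    (hw' : w' = w - (α / β) • Matrix.toEuclideanLin HF⁻¹ (gradient F w)) :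
    F w' - F w ≤ -(α ^ 3 / (2 * β ^ 4)) * (‖gradient L w‖ - β * ε) ^ 2 := by
  have hβ : 0 < β := hα.trans_le hαβ
  set p := Matrix.toEuclideanLin HF⁻¹ (gradient F w)
  set pL := Matrix.toEuclideanLin HL⁻¹ (gradient L w)
  have hLunit := Matrix.isUnit_of_mul_sq_le_inner_toEuclideanLin hα fun x ↦ (hboundHL x).1
  have hFunit := Matrix.isUnit_of_mul_sq_le_inner_toEuclideanLin hα fun x ↦ (hboundHF x).1
  have hgradL : ‖gradient L w‖ ≤ β * ‖pL‖ := by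
    rw [← Matrix.toEuclideanLin_apply_toEuclideanLin_inv hLunit (gradient L w)]
    exact Matrix.norm_toEuclideanLin_apply_le hHL hβ.le
      (fun x ↦ ⟨(by positivity : 0 ≤ α * ‖x‖ ^ 2).trans (hboundHL x).1, (hboundHL x).2⟩) pL
  have hp : ‖gradient L w‖ - β * ε ≤ β * ‖p‖ := by
    have := mul_le_mul_of_nonneg_left ((norm_sub_norm_le pL p).trans herr) hβ.le
    linarith
  have hpF : α * ‖p‖ ^ 2 ≤ ⟪gradient F w, p⟫ := by
    conv_rhs => rw [← Matrix.toEuclideanLin_apply_toEuclideanLin_inv hFunit (gradient F w),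
      real_inner_comm]
    exact (hboundHF p).1
  have hdescent : F w' - F w ≤ -(α ^ 2 / (2 * β)) * ‖p‖ ^ 2 :=
    hw' ▸ sub_le_neg_mul_sq_of_le_inner_gradient (hF.differentiable (by norm_num)) hsmooth hβ
      hα.le hpF
  have hrate : α ^ 3 / (2 * β ^ 4) * (β * ‖p‖) ^ 2 ≤ α ^ 2 / (2 * β) * ‖p‖ ^ 2 := by
    have : α ^ 3 / (2 * β ^ 4) * (β * ‖p‖) ^ 2 = α / β * (α ^ 2 / (2 * β) * ‖p‖ ^ 2) := by
      field_simp
    rw [this]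
    exact mul_le_of_le_one_left (by positivity) ((div_le_one hβ).mpr hαβ)
  have hgap : α ^ 3 / (2 * β ^ 4) * (‖gradient L w‖ - β * ε) ^ 2
      ≤ α ^ 3 / (2 * β ^ 4) * (β * ‖p‖) ^ 2 := by
    gcongr
  linarith

/-- (Theorem 4.1, Newton's method on AdaCore coresets, per-iteration form.)
Let `0 < α ≤ β`, `ε ≥ 0`. Let `L` (full loss) and `F` (weighted coreset loss) be twice
continuously differentiable with `F` `β`-smooth, and suppose at `w` the Hessians
`HL = ∇²L(w)` and `HF = ∇²F(w)` are symmetric with `αI ≼ HL, HF ≼ βI`. If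
`‖HL⁻¹∇L(w) − HF⁻¹∇F(w)‖ ≤ ε` and `‖∇L(w)‖ ≥ βε`, then the Newton step on the coreset
loss with learning rate `α/β`, `w' = w − (α/β) HF⁻¹ ∇F(w)`, satisfies
`F(w') − F(w) ≤ −(α³/(2β⁴)) (‖∇L(w)‖ − βε)²`. -/
theorem newton_descent_on_coreset {d : ℕ} (L F : EuclideanSpace ℝ (Fin d) → ℝ)
    (α β ε : ℝ) (hα : 0 < α) (hαβ : α ≤ β) (hε : 0 ≤ ε)
    (hL : ContDiff ℝ 2 L) (hF : ContDiff ℝ 2 F)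
    (hsmooth : ∀ u v : EuclideanSpace ℝ (Fin d),
      ‖gradient F u - gradient F v‖ ≤ β * ‖u - v‖)
    (w : EuclideanSpace ℝ (Fin d))
    (HL HF : Matrix (Fin d) (Fin d) ℝ) (hHL : HL.IsHermitian) (hHF : HF.IsHermitian)
    (hHLdef : ∀ v : EuclideanSpace ℝ (Fin d),
      Matrix.toEuclideanLin HL v = fderiv ℝ (gradient L) w v)
    (hHFdef : ∀ v : EuclideanSpace ℝ (Fin d),
      Matrix.toEuclideanLin HF v = fderiv ℝ (gradient F) w v)
    (hboundHL : ∀ x : EuclideanSpace ℝ (Fin d),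
      α * ‖x‖ ^ 2 ≤ ⟪x, Matrix.toEuclideanLin HL x⟫ ∧
      ⟪x, Matrix.toEuclideanLin HL x⟫ ≤ β * ‖x‖ ^ 2)
    (hboundHF : ∀ x : EuclideanSpace ℝ (Fin d),
      α * ‖x‖ ^ 2 ≤ ⟪x, Matrix.toEuclideanLin HF x⟫ ∧
      ⟪x, Matrix.toEuclideanLin HF x⟫ ≤ β * ‖x‖ ^ 2)
    (herr : ‖Matrix.toEuclideanLin HL⁻¹ (gradient L w) -
      Matrix.toEuclideanLin HF⁻¹ (gradient F w)‖ ≤ ε)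
    (hbig : β * ε ≤ ‖gradient L w‖)
    (w' : EuclideanSpace ℝ (Fin d))
    (hw' : w' = w - (α / β) • Matrix.toEuclideanLin HF⁻¹ (gradient F w)) :
    F w' - F w ≤ -(α ^ 3 / (2 * β ^ 4)) * (‖gradient L w‖ - β * ε) ^ 2 :=
  newton_descent_on_coreset_general L F α β ε hα hαβ hF hsmooth w HL HF hHL hboundHL hboundHF herr
    hbig w' hw'
end

section
/- (Corollary 4.2, AdaHessian with Hessian power k on AdaCore coresets, per-iteration form.) Let 0 < α ≤ β, ε ≥ 0, and k ∈ [0,1]. Let L : ℝ^d → ℝ (the full loss) and F : ℝ^d → ℝ (the weighted coreset loss) be twice continuously differentiable, with F β-smooth, and suppose at a point w ∈ ℝ^d the Hessians H_L = ∇²L(w) and H_F = ∇²F(w) are symmetric and satisfy αI ≼ H_L ≼ βI and αI ≼ H_F ≼ βI. Suppose ‖H_L⁻¹∇L(w) − H_F⁻¹∇F(w)‖ ≤ ε and ‖∇L(w)‖ ≥ βε. Then the update w' = w − (α^k/β) H_F^{−k} ∇F(w) satisfies F(w') − F(w) ≤ −(α^{k+2}/(2β^{k+3})) (‖∇L(w)‖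 − βε)². -/
/-!
Smoothness of `F` bounds `F (w - v) - F w` by `-⟪∇F w, v⟫ + β ‖v‖² / 2`. In an eigenbasis of `HF`
the step `v = η HF^{-k} ∇F w`, `η = α^k / β`, rescales the `i`-th coordinate of `∇F w` by
`η λᵢ^{-k} ∈ [η β^{-k}, 1 / β]`, so every coordinate contributes a decrease of at least
`η β^{-k} / 2` times its square. Finally `‖∇F w‖ ≥ α ‖HF⁻¹ ∇F w‖ ≥ α (‖HL⁻¹ ∇L w‖ - ε)
≥ α (‖∇L w‖ / β - ε)` turns this into a bound in terms of `‖∇L w‖`.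
-/

open scoped RealInnerProductSpace

open Matrix

section Descent

variable {E : Type*} [NormedAddCommGroup E] [InnerProductSpace ℝ E] [CompleteSpace E]

theorem le_add_inner_gradient_add_of_norm_gradient_sub_le {f : E → ℝ} {β : ℝ}
    (hf : Differentiable ℝ f)
    (hβ : ∀ u v : E, ‖gradient f u - gradient f v‖ ≤ β * ‖u - v‖) (x v : E) :
    f (x + v) ≤ f x + ⟪gradient f x, v⟫ + β / 2 * ‖v‖ ^ 2 := by
  have hline : ∀ t : ℝ,
      HasDerivAt (fun t : ℝ => f (x + t • v)) ⟪gradient f (x + t • v), v⟫ t := by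
    intro t
    have hpath : HasDerivAt (fun t : ℝ => x + t • v) v t := by
      simpa using ((hasDerivAt_id t).smul_const v).const_add x
    simpa [Function.comp_def] using
      (hf (x + t • v)).hasGradientAt.hasFDerivAt.comp_hasDerivAt t hpath
  have hquad : ∀ t : ℝ,
      HasDerivAt (fun t : ℝ => f x + t * ⟪gradient f x, v⟫ + β / 2 * t ^ 2 * ‖v‖ ^ 2)
        (⟪gradient f x, v⟫ + β * t * ‖v‖ ^ 2) t := fun t =>
    ((((hasDerivAt_id t).mul_const _).const_add (f x)).add
      (((hasDerivAt_pow 2 t).const_mul (β / 2)).mul_const (‖v‖ ^ 2))).congr_deriv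
        (by push_cast; ring)
  have hslope : ∀ t ∈ Set.Ico (0 : ℝ) 1,
      ⟪gradient f (x + t • v), v⟫ ≤ ⟪gradient f x, v⟫ + β * t * ‖v‖ ^ 2 := by
    rintro t ⟨ht, -⟩
    have := calc ⟪gradient f (x + t • v) - gradient f x, v⟫
        ≤ ‖gradient f (x + t • v) - gradient f x‖ * ‖v‖ := real_inner_le_norm _ _
      _ ≤ β * ‖t • v‖ * ‖v‖ := by
        simpa using mul_le_mul_of_nonneg_right (hβ (x + t • v) x) (norm_nonneg v)
      _ = β * t * ‖v‖ ^ 2 := by rw [norm_smul, Real.norm_of_nonneg ht]; ring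
    rw [inner_sub_left] at this
    linarith
  simpa using image_le_of_deriv_right_le_deriv_boundary
    (continuous_iff_continuousAt.2 fun t => (hline t).continuousAt).continuousOn
    (fun t _ => (hline t).hasDerivWithinAt) (by simp)
    (continuous_iff_continuousAt.2 fun t => (hquad t).continuousAt).continuousOn
    (fun t _ => (hquad t).hasDerivWithinAt) hslope (Set.right_mem_Icc.2 zero_le_one)

end Descent

section Spectral

theorem Matrix.star_eq_transpose_real {n : Type*} (U : Matrix n n ℝ) : star U = Uᵀ := by
  rw [star_eq_conjTranspose, conjTranspose_eq_transpose_of_trivial]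

theorem EuclideanSpace.real_inner_eq_dotProduct {n : Type*} [Fintype n]
    (x y : EuclideanSpace ℝ n) : ⟪x, y⟫ = x.ofLp ⬝ᵥ y.ofLp := by
  rw [EuclideanSpace.inner_eq_star_dotProduct, star_trivial, dotProduct_comm]

variable {n : Type*} [Fintype n] [DecidableEq n]

theorem Matrix.toEuclideanLin_apply_toEuclideanLin_inv_apply {H : Matrix n n ℝ}
    (h : IsUnit H.det) (y : EuclideanSpace ℝ n) :
    toEuclideanLin H (toEuclideanLin H⁻¹ y) = y := by
  rw [← LinearMap.comp_apply, ← toLpLin_mul_same, mul_nonsing_inv _ h, toLpLin_one,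
    LinearMap.id_apply]

theorem Matrix.inner_toEuclideanLin_conj_diagonal (U : Matrix n n ℝ) (c : n → ℝ)
    (x : EuclideanSpace ℝ n) :
    ⟪x, toEuclideanLin (U * diagonal c * star U) x⟫ = ∑ i, c i * (star U *ᵥ x.ofLp) i ^ 2 := by
  rw [EuclideanSpace.real_inner_eq_dotProduct, ofLp_toLpLin, toLin'_apply,
    ← mulVec_mulVec, ← mulVec_mulVec, dotProduct_mulVec,
    star_eq_transpose_real, ← mulVec_transpose]
  simp only [dotProduct, mulVec_diagonal]
  exact Finset.sum_congr rfl fun i _ => by ring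

theorem Matrix.dotProduct_self_unitary_mulVec {U : Matrix n n ℝ} (hU : U ∈ unitaryGroup n ℝ)
    (z : n → ℝ) : (U *ᵥ z) ⬝ᵥ (U *ᵥ z) = z ⬝ᵥ z := by
  rw [dotProduct_mulVec, ← vecMul_transpose, vecMul_vecMul, ← star_eq_transpose_real,
    mem_unitaryGroup_iff'.1 hU, vecMul_one]

variable {U : Matrix n n ℝ} (hU : U ∈ unitaryGroup n ℝ)
include hU

theorem Matrix.norm_sq_toEuclideanLin_conj_diagonal (c : n → ℝ) (x : EuclideanSpace ℝ n) :
    ‖toEuclideanLin (U * diagonal c * star U) x‖ ^ 2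
      = ∑ i, c i ^ 2 * (star U *ᵥ x.ofLp) i ^ 2 := by
  rw [← real_inner_self_eq_norm_sq, EuclideanSpace.real_inner_eq_dotProduct, ofLp_toLpLin,
    toLin'_apply, ← mulVec_mulVec, ← mulVec_mulVec, dotProduct_self_unitary_mulVec hU]
  simp only [dotProduct, mulVec_diagonal]
  exact Finset.sum_congr rfl fun i _ => by ring

theorem Matrix.norm_sq_eq_sum_sq_star_mulVec (x : EuclideanSpace ℝ n) :
    ‖x‖ ^ 2 = ∑ i, (star U *ᵥ x.ofLp) i ^ 2 := by
  simpa [mem_unitaryGroup_iff.1 hU] using norm_sq_toEuclideanLin_conj_diagonal hU 1 x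

theorem Matrix.norm_toEuclideanLin_conj_diagonal_le {c : n → ℝ} {b : ℝ} (hb : 0 ≤ b)
    (hc : ∀ i, |c i| ≤ b) (x : EuclideanSpace ℝ n) :
    ‖toEuclideanLin (U * diagonal c * star U) x‖ ≤ b * ‖x‖ := by
  refine (pow_le_pow_iff_left₀ (norm_nonneg _) (by positivity) two_ne_zero).1 ?_
  rw [mul_pow, norm_sq_toEuclideanLin_conj_diagonal hU, norm_sq_eq_sum_sq_star_mulVec hU,
    Finset.mul_sum]
  refine Finset.sum_le_sum fun i _ => mul_le_mul_of_nonneg_right ?_ (sq_nonneg _)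
  simpa only [sq_abs] using pow_le_pow_left₀ (abs_nonneg _) (hc i) 2

theorem Matrix.mul_norm_le_norm_toEuclideanLin_conj_diagonal {c : n → ℝ} {a : ℝ} (ha : 0 ≤ a)
    (hc : ∀ i, a ≤ |c i|) (x : EuclideanSpace ℝ n) :
    a * ‖x‖ ≤ ‖toEuclideanLin (U * diagonal c * star U) x‖ := by
  refine (pow_le_pow_iff_left₀ (by positivity) (norm_nonneg _) two_ne_zero).1 ?_
  rw [mul_pow, norm_sq_toEuclideanLin_conj_diagonal hU, norm_sq_eq_sum_sq_star_mulVec hU,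
    Finset.mul_sum]
  refine Finset.sum_le_sum fun i _ => mul_le_mul_of_nonneg_right ?_ (sq_nonneg _)
  simpa only [sq_abs] using pow_le_pow_left₀ ha (hc i) 2

end Spectral

namespace Matrix.IsHermitian

variable {n : Type*} [Fintype n] [DecidableEq n] {H : Matrix n n ℝ} (hH : H.IsHermitian)
include hH

theorem eq_conj_diagonal_eigenvalues :
    H = (hH.eigenvectorUnitary : Matrix n n ℝ) * diagonal hH.eigenvalues *
      star (hH.eigenvectorUnitary : Matrix n n ℝ) := by
  conv_lhs => rw [hH.spectral_theorem]
  simp [Unitary.conjStarAlgAut_apply]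

theorem eigenvalues_mem_Icc_s7 {a b : ℝ}
    (hab : ∀ x : EuclideanSpace ℝ n,
      a * ‖x‖ ^ 2 ≤ ⟪x, toEuclideanLin H x⟫ ∧ ⟪x, toEuclideanLin H x⟫ ≤ b * ‖x‖ ^ 2)
    (i : n) : hH.eigenvalues i ∈ Set.Icc a b := by
  have hunit : ‖hH.eigenvectorBasis i‖ = 1 := hH.eigenvectorBasis.orthonormal.1 i
  have heig : toEuclideanLin H (hH.eigenvectorBasis i)
      = hH.eigenvalues i • hH.eigenvectorBasis i :=
    congrArg (WithLp.toLp 2) (hH.mulVec_eigenvectorBasis i)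
  simpa [heig, real_inner_smul_right, hunit] using hab (hH.eigenvectorBasis i)

theorem norm_toEuclideanLin_le {b : ℝ} (hb : 0 ≤ b) (h : ∀ i, |hH.eigenvalues i| ≤ b)
    (x : EuclideanSpace ℝ n) : ‖toEuclideanLin H x‖ ≤ b * ‖x‖ := by
  rw [hH.eq_conj_diagonal_eigenvalues]
  exact norm_toEuclideanLin_conj_diagonal_le hH.eigenvectorUnitary.2 hb h x

theorem mul_norm_le_norm_toEuclideanLin {a : ℝ} (ha : 0 ≤ a) (h : ∀ i, a ≤ |hH.eigenvalues i|)
    (x : EuclideanSpace ℝ n) : a * ‖x‖ ≤ ‖toEuclideanLin H x‖ := by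
  rw [hH.eq_conj_diagonal_eigenvalues]
  exact mul_norm_le_norm_toEuclideanLin_conj_diagonal hH.eigenvectorUnitary.2 ha h x

theorem isUnit_det_of_eigenvalues_pos (h : ∀ i, 0 < hH.eigenvalues i) : IsUnit H.det :=
  (hH.posDef_iff_eigenvalues_pos.2 h).det_pos.ne'.isUnit

end Matrix.IsHermitian


section PreconditionedStep

variable {n : Type*} [Fintype n] [DecidableEq n]

theorem le_sub_of_preconditioned_gradient_step {f : EuclideanSpace ℝ n → ℝ} {β η m : ℝ}
    (hf : Differentiable ℝ f)
    (hβ : ∀ u v, ‖gradient f u - gradient f v‖ ≤ β * ‖u - v‖)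
    {U : Matrix n n ℝ} (hU : U ∈ unitaryGroup n ℝ) {c : n → ℝ} (hη : 0 ≤ η) (hm : 0 ≤ m)
    (hc : ∀ i, m ≤ c i ∧ β * η * c i ≤ 1) (x : EuclideanSpace ℝ n) :
    f (x - η • toEuclideanLin (U * diagonal c * star U) (gradient f x))
      ≤ f x - η * m / 2 * ‖gradient f x‖ ^ 2 := by
  set g := gradient f x
  set y := star U *ᵥ g.ofLp
  have hdesc := le_add_inner_gradient_add_of_norm_gradient_sub_le hf hβ x
    (-(η • toEuclideanLin (U * diagonal c * star U) g))
  rw [← sub_eq_add_neg, inner_neg_right, real_inner_smul_right, norm_neg, norm_smul,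
    mul_pow, Real.norm_of_nonneg hη, inner_toEuclideanLin_conj_diagonal,
    norm_sq_toEuclideanLin_conj_diagonal hU] at hdesc
  -- per eigen-direction, `t = η c i ∈ [η m, 1 / β]` gives `-t + β t² / 2 ≤ -t / 2 ≤ -η m / 2`
  have hcoord : ∀ i, -(η * (c i * y i ^ 2)) + β / 2 * (η ^ 2 * (c i ^ 2 * y i ^ 2))
      ≤ -(η * m / 2 * y i ^ 2) := by
    intro i
    obtain ⟨hmc, hβc⟩ := hc i
    have ht : η * m ≤ η * c i := mul_le_mul_of_nonneg_left hmc hη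
    have hy := sq_nonneg (y i)
    nlinarith [mul_nonneg (mul_nonneg hη (hm.trans hmc)) hy,
      mul_le_mul_of_nonneg_right ht hy, mul_le_mul_of_nonneg_right hβc
        (mul_nonneg (mul_nonneg hη (hm.trans hmc)) hy)]
  have hsum := Finset.sum_le_sum fun i (_ : i ∈ Finset.univ) => hcoord i
  rw [Finset.sum_add_distrib, Finset.sum_neg_distrib, Finset.sum_neg_distrib, ← Finset.mul_sum,
    ← Finset.mul_sum, ← Finset.mul_sum, ← Finset.mul_sum, ← norm_sq_eq_sum_sq_star_mulVec hU]
    at hsum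
  linarith

theorem div_mul_sub_le_norm_of_norm_inv_sub_inv_le {HL HF : Matrix n n ℝ}
    (hHL : HL.IsHermitian) (hHF : HF.IsHermitian) {α β ε : ℝ} (hα : 0 < α) (hαβ : α ≤ β)
    (hL : ∀ i, hHL.eigenvalues i ∈ Set.Icc α β) (hF : ∀ i, hHF.eigenvalues i ∈ Set.Icc α β)
    {gL g : EuclideanSpace ℝ n}
    (herr : ‖toEuclideanLin HL⁻¹ gL - toEuclideanLin HF⁻¹ g‖ ≤ ε) :
    α / β * (‖gL‖ - β * ε) ≤ ‖g‖ := by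
  have hβ : 0 < β := hα.trans_le hαβ
  set u := toEuclideanLin HL⁻¹ gL
  set v := toEuclideanLin HF⁻¹ g
  have hu : ‖gL‖ ≤ β * ‖u‖ := by
    simpa [u, toEuclideanLin_apply_toEuclideanLin_inv_apply
      (hHL.isUnit_det_of_eigenvalues_pos fun i => hα.trans_le (hL i).1)] using
      hHL.norm_toEuclideanLin_le hβ.le
        (fun i => (abs_of_pos (hα.trans_le (hL i).1)).trans_le (hL i).2) u
  have hv : α * ‖v‖ ≤ ‖g‖ := by
    simpa [v, toEuclideanLin_apply_toEuclideanLin_inv_apply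
      (hHF.isUnit_det_of_eigenvalues_pos fun i => hα.trans_le (hF i).1)] using
      hHF.mul_norm_le_norm_toEuclideanLin hα.le
        (fun i => (hF i).1.trans (le_abs_self _)) v
  have huv : ‖u‖ - ε ≤ ‖v‖ := by linarith [norm_sub_norm_le u v]
  calc α / β * (‖gL‖ - β * ε) ≤ α / β * (β * ‖u‖ - β * ε) := by gcongr
    _ = α * (‖u‖ - ε) := by field_simp
    _ ≤ α * ‖v‖ := by gcongr
    _ ≤ ‖g‖ := hv

end PreconditionedStep

theorem rpow_neg_bounds_of_mem_Icc {α β k t : ℝ} (hα : 0 < α) (hk : 0 ≤ k)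
    (ht : t ∈ Set.Icc α β) : β ^ (-k) ≤ t ^ (-k) ∧ β * (α ^ k / β) * t ^ (-k) ≤ 1 := by
  have htpos : 0 < t := hα.trans_le ht.1
  have hβ : 0 < β := htpos.trans_le ht.2
  refine ⟨Real.rpow_le_rpow_of_nonpos htpos ht.2 (neg_nonpos.2 hk), ?_⟩
  calc β * (α ^ k / β) * t ^ (-k) ≤ α ^ k * α ^ (-k) := by
        rw [mul_div_cancel₀ _ hβ.ne']
        exact mul_le_mul_of_nonneg_left
          (Real.rpow_le_rpow_of_nonpos hα ht.1 (neg_nonpos.2 hk)) (by positivity)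
    _ = 1 := by rw [← Real.rpow_add hα, add_neg_cancel, Real.rpow_zero]

theorem adahessian_descent_on_coreset_general {d : ℕ} (L F : EuclideanSpace ℝ (Fin d) → ℝ)
    (α β ε k : ℝ) (hα : 0 < α) (hαβ : α ≤ β) (hk0 : 0 ≤ k)
    (hF : ContDiff ℝ 2 F)
    (hsmooth : ∀ u v : EuclideanSpace ℝ (Fin d),
      ‖gradient F u - gradient F v‖ ≤ β * ‖u - v‖)
    (w : EuclideanSpace ℝ (Fin d))
    (HL HF : Matrix (Fin d) (Fin d) ℝ) (hHL : HL.IsHermitian) (hHF : HF.IsHermitian)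
    (hboundHL : ∀ x : EuclideanSpace ℝ (Fin d),
      α * ‖x‖ ^ 2 ≤ ⟪x, Matrix.toEuclideanLin HL x⟫ ∧
      ⟪x, Matrix.toEuclideanLin HL x⟫ ≤ β * ‖x‖ ^ 2)
    (hboundHF : ∀ x : EuclideanSpace ℝ (Fin d),
      α * ‖x‖ ^ 2 ≤ ⟪x, Matrix.toEuclideanLin HF x⟫ ∧
      ⟪x, Matrix.toEuclideanLin HF x⟫ ≤ β * ‖x‖ ^ 2)
    (herr : ‖Matrix.toEuclideanLin HL⁻¹ (gradient L w) -
      Matrix.toEuclideanLin HF⁻¹ (gradient F w)‖ ≤ ε)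
    (hbig : β * ε ≤ ‖gradient L w‖)
    (w' : EuclideanSpace ℝ (Fin d))
    (hw' : w' = w -
      (α ^ k / β) • Matrix.toEuclideanLin (specPow HF hHF (-k)) (gradient F w)) :
    F w' - F w ≤ -(α ^ (k + 2) / (2 * β ^ (k + 3))) * (‖gradient L w‖ - β * ε) ^ 2 := by
  have hβ : 0 < β := hα.trans_le hαβ
  have heigF := hHF.eigenvalues_mem_Icc_s7 hboundHF
  have hstep : F w' - F w ≤ -(α ^ k / β * β ^ (-k) / 2) * ‖gradient F w‖ ^ 2 := by
    have := le_sub_of_preconditioned_gradient_step (hF.differentiable (by norm_num)) hsmooth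
      hHF.eigenvectorUnitary.2 (by positivity) (by positivity)
      (fun i => rpow_neg_bounds_of_mem_Icc hα hk0 (heigF i)) w
    rw [hw', specPow]
    linarith
  have hgrad := div_mul_sub_le_norm_of_norm_inv_sub_inv_le hHL hHF hα hαβ
    (hHL.eigenvalues_mem_Icc_s7 hboundHL) heigF herr
  have hgap : 0 ≤ α / β * (‖gradient L w‖ - β * ε) := by
    have := sub_nonneg.2 hbig
    positivity
  calc F w' - F w ≤ -(α ^ k / β * β ^ (-k) / 2) * ‖gradient F w‖ ^ 2 := hstep
    _ ≤ -(α ^ k / β * β ^ (-k) / 2) * (α / β * (‖gradient L w‖ - β * ε)) ^ 2 := by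
      rw [neg_mul, neg_mul, neg_le_neg_iff]
      gcongr
    _ = -(α ^ (k + 2) / (2 * β ^ (k + 3))) * (‖gradient L w‖ - β * ε) ^ 2 := by
      rw [Real.rpow_add hα, Real.rpow_add hβ, Real.rpow_neg hβ.le, Real.rpow_two,
        show (3 : ℝ) = (3 : ℕ) by norm_num, Real.rpow_natCast]
      field_simp

/-- (Corollary 4.2, AdaHessian with Hessian power `k` on AdaCore coresets.)
Let `0 < α ≤ β`, `ε ≥ 0`, `k ∈ [0,1]`. Let `L` (full loss) and `F` (coreset loss) be
twice continuously differentiable with `F` `β`-smooth, and at `w` let the Hessians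
`HL = ∇²L(w)`, `HF = ∇²F(w)` be symmetric with `αI ≼ HL, HF ≼ βI`. If
`‖HL⁻¹∇L(w) − HF⁻¹∇F(w)‖ ≤ ε` and `‖∇L(w)‖ ≥ βε`, then the update
`w' = w − (α^k/β) HF^{−k} ∇F(w)` satisfies
`F(w') − F(w) ≤ −(α^{k+2}/(2β^{k+3})) (‖∇L(w)‖ − βε)²`. -/
theorem adahessian_descent_on_coreset {d : ℕ} (L F : EuclideanSpace ℝ (Fin d) → ℝ)
    (α β ε k : ℝ) (hα : 0 < α) (hαβ : α ≤ β) (hε : 0 ≤ ε) (hk0 : 0 ≤ k) (hk1 : k ≤ 1)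
    (hL : ContDiff ℝ 2 L) (hF : ContDiff ℝ 2 F)
    (hsmooth : ∀ u v : EuclideanSpace ℝ (Fin d),
      ‖gradient F u - gradient F v‖ ≤ β * ‖u - v‖)
    (w : EuclideanSpace ℝ (Fin d))
    (HL HF : Matrix (Fin d) (Fin d) ℝ) (hHL : HL.IsHermitian) (hHF : HF.IsHermitian)
    (hHLdef : ∀ v : EuclideanSpace ℝ (Fin d),
      Matrix.toEuclideanLin HL v = fderiv ℝ (gradient L) w v)
    (hHFdef : ∀ v : EuclideanSpace ℝ (Fin d),
      Matrix.toEuclideanLin HF v = fderiv ℝ (gradient F) w v)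
    (hboundHL : ∀ x : EuclideanSpace ℝ (Fin d),
      α * ‖x‖ ^ 2 ≤ ⟪x, Matrix.toEuclideanLin HL x⟫ ∧
      ⟪x, Matrix.toEuclideanLin HL x⟫ ≤ β * ‖x‖ ^ 2)
    (hboundHF : ∀ x : EuclideanSpace ℝ (Fin d),
      α * ‖x‖ ^ 2 ≤ ⟪x, Matrix.toEuclideanLin HF x⟫ ∧
      ⟪x, Matrix.toEuclideanLin HF x⟫ ≤ β * ‖x‖ ^ 2)
    (herr : ‖Matrix.toEuclideanLin HL⁻¹ (gradient L w) -
      Matrix.toEuclideanLin HF⁻¹ (gradient F w)‖ ≤ ε)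
    (hbig : β * ε ≤ ‖gradient L w‖)
    (w' : EuclideanSpace ℝ (Fin d))
    (hw' : w' = w -
      (α ^ k / β) • Matrix.toEuclideanLin (specPow HF hHF (-k)) (gradient F w)) :
    F w' - F w ≤ -(α ^ (k + 2) / (2 * β ^ (k + 3))) * (‖gradient L w‖ - β * ε) ^ 2 :=
  adahessian_descent_on_coreset_general L F α β ε k hα hαβ hk0 hF hsmooth w HL HF hHL hHF hboundHL
    hboundHF herr hbig w' hw'
end

section
/- (Theorem 4.3, gradient descent on AdaCore coresets under PL*, per-iteration form.) Let L : ℝ^d → ℝ be differentiable and satisfy the μ-PL* condition with μ > 0. Let 0 < α ≤ β, let η > 0, ε ≥ 0, and ∇_max ≥ 0. Suppose at iteration t the update is w_{t+1} = w_t − η g^S for some vector g^S ∈ ℝ^d (the weighted coreset gradient) satisfying: (i) L(w_{t+1}) − L(w_t) ≤ −(η/2)‖g^S‖²; (ii) ‖g^S‖ ≥ (α/β)(‖∇L(w_t)‖ − βε); and (iii) βε ≤ ‖∇L(w_t)‖ ≤ ∇_max. Then L(w_{t+1}) ≤ (1 − ημα²/β²) L(w_t) − (ηα²/(2β²)) (β²ε²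 − 2βε∇_max). -/
/-!
Write `g = ‖∇L(w_t)‖` and `c = βε`. Since `0 ≤ g - c`, the coreset bound squares to
`‖g^S‖² ≥ (α/β)² (g - c)²`, and `(g - c)² = g² - 2cg + c² ≥ 2μL(w_t) - 2c∇_max + c²` by PL* and
`g ≤ ∇_max`. Inserting this into the descent inequality gives the claimed contraction.
-/

theorem two_mul_mul_add_sq_sub_le_sq_sub {μ ℓ g c G : ℝ} (hPL : μ * ℓ ≤ 1 / 2 * g ^ 2)
    (hc : 0 ≤ c) (hgG : g ≤ G) : 2 * μ * ℓ + (c ^ 2 - 2 * c * G) ≤ (g - c) ^ 2 := by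
  nlinarith [mul_le_mul_of_nonneg_left hgG hc]

theorem sq_mul_le_sq_of_pl_of_mul_sub_le {μ ℓ g c G κ s : ℝ} (hPL : μ * ℓ ≤ 1 / 2 * g ^ 2)
    (hc : 0 ≤ c) (hcg : c ≤ g) (hgG : g ≤ G) (hκ : 0 ≤ κ) (hs : κ * (g - c) ≤ s) :
    κ ^ 2 * (2 * μ * ℓ + (c ^ 2 - 2 * c * G)) ≤ s ^ 2 :=
  calc κ ^ 2 * (2 * μ * ℓ + (c ^ 2 - 2 * c * G))
      ≤ κ ^ 2 * (g - c) ^ 2 := by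
        gcongr; exact two_mul_mul_add_sq_sub_le_sq_sub hPL hc hgG
    _ = (κ * (g - c)) ^ 2 := (mul_pow κ (g - c) 2).symm
    _ ≤ s ^ 2 := pow_le_pow_left₀ (mul_nonneg hκ (sub_nonneg.2 hcg)) hs 2

theorem pl_descent_on_coreset_general {d : ℕ} (L : EuclideanSpace ℝ (Fin d) → ℝ)
    (μ : ℝ)
    (hPL : ∀ w : EuclideanSpace ℝ (Fin d), μ * L w ≤ (1 / 2) * ‖gradient L w‖ ^ 2)
    (α β η ε gmax : ℝ) (hα : 0 < α) (hαβ : α ≤ β) (hη : 0 < η) (hε : 0 ≤ ε)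
    (wt wt1 gS : EuclideanSpace ℝ (Fin d))
    (hdescent : L wt1 - L wt ≤ -(η / 2) * ‖gS‖ ^ 2)
    (hlow : (α / β) * (‖gradient L wt‖ - β * ε) ≤ ‖gS‖)
    (hεg : β * ε ≤ ‖gradient L wt‖) (hup : ‖gradient L wt‖ ≤ gmax) :
    L wt1 ≤ (1 - η * μ * α ^ 2 / β ^ 2) * L wt -
      (η * α ^ 2 / (2 * β ^ 2)) * (β ^ 2 * ε ^ 2 - 2 * β * ε * gmax) := by
  have hβ : 0 < β := hα.trans_le hαβ
  have hgS := sq_mul_le_sq_of_pl_of_mul_sub_le (hPL wt) (by positivity) hεg hup (by positivity) hlow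
  calc L wt1 ≤ L wt - η / 2 * ‖gS‖ ^ 2 := by linarith
    _ ≤ L wt - η / 2 * ((α / β) ^ 2 * (2 * μ * L wt + ((β * ε) ^ 2 - 2 * (β * ε) * gmax))) := by
      gcongr
    _ = (1 - η * μ * α ^ 2 / β ^ 2) * L wt -
        (η * α ^ 2 / (2 * β ^ 2)) * (β ^ 2 * ε ^ 2 - 2 * β * ε * gmax) := by
      field_simp; ring

/-- (Theorem 4.3, gradient descent on AdaCore coresets under PL*, per-iteration form.)
Let `L` be differentiable and `μ`-PL*, `0 < α ≤ β`, `η > 0`, `ε ≥ 0`, `∇_max ≥ 0`.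
If the update `w_{t+1} = w_t − η g^S` satisfies the descent inequality
`L(w_{t+1}) − L(w_t) ≤ −(η/2)‖g^S‖²`, the coreset gradient bound
`‖g^S‖ ≥ (α/β)(‖∇L(w_t)‖ − βε)`, and `βε ≤ ‖∇L(w_t)‖ ≤ ∇_max`, then
`L(w_{t+1}) ≤ (1 − ημα²/β²) L(w_t) − (ηα²/(2β²))(β²ε² − 2βε∇_max)`. -/
theorem pl_descent_on_coreset {d : ℕ} (L : EuclideanSpace ℝ (Fin d) → ℝ)
    (hdiff : Differentiable ℝ L) (μ : ℝ) (hμ : 0 < μ)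
    (hPL : ∀ w : EuclideanSpace ℝ (Fin d), μ * L w ≤ (1 / 2) * ‖gradient L w‖ ^ 2)
    (α β η ε gmax : ℝ) (hα : 0 < α) (hαβ : α ≤ β) (hη : 0 < η) (hε : 0 ≤ ε)
    (hgmax : 0 ≤ gmax)
    (wt wt1 gS : EuclideanSpace ℝ (Fin d)) (hupd : wt1 = wt - η • gS)
    (hdescent : L wt1 - L wt ≤ -(η / 2) * ‖gS‖ ^ 2)
    (hlow : (α / β) * (‖gradient L wt‖ - β * ε) ≤ ‖gS‖)
    (hεg : β * ε ≤ ‖gradient L wt‖) (hup : ‖gradient L wt‖ ≤ gmax) :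
    L wt1 ≤ (1 - η * μ * α ^ 2 / β ^ 2) * L wt -
      (η * α ^ 2 / (2 * β ^ 2)) * (β ^ 2 * ε ^ 2 - 2 * β * ε * gmax) :=
  pl_descent_on_coreset_general L μ hPL α β η ε gmax hα hαβ hη hε wt wt1 gS hdescent hlow hεg hup
end

section
/- (Gradient estimation error is bounded by the facility-location objective.) Let E be a real normed vector space, let V be a finite index set, let (v_i)_{i∈V} be vectors in E, and let S ⊆ V be nonempty. Then there exist nonnegative integer weights (γ_j)_{j∈S} with Σ_{j∈S} γ_j = |V| such that ‖Σ_{i∈V} v_i − Σ_{j∈S} γ_j v_j‖ ≤ Σ_{i∈V} min_{j∈S} ‖v_i − v_j‖. (Namely, γ_j is the number of i ∈ V whose nearest element of S is j, under a fixed choice of nearest element.) -/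
/-! Send every `i ∈ V` to a nearest point `f i ∈ S` and let `γ j` count the fibre of `f` over `j`.
Then `Σ_{j∈S} γ_j v_j = Σ_{i∈V} v_{f i}`, so the error is `‖Σ_{i∈V} (v_i - v_{f i})‖`, which the
triangle inequality bounds by `Σ_{i∈V} ‖v_i - v_{f i}‖ = Σ_{i∈V} min_{j∈S} ‖v_i - v_j‖`. -/

open Finset

theorem Finset.sum_card_fiberwise_nsmul_of_mapsTo {ι κ M : Type*} [DecidableEq κ]
    [AddCommMonoid M] {s : Finset ι} {t : Finset κ} {f : ι → κ} (H : (s : Set ι).MapsTo f t)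
    (g : κ → M) : ∑ b ∈ t, #{a ∈ s | f a = b} • g b = ∑ a ∈ s, g (f a) := by
  rw [← sum_fiberwise_of_maps_to H]
  refine sum_congr rfl fun b _ => ?_
  rw [sum_congr rfl fun a ha => congrArg g (mem_filter.1 ha).2, sum_const]

theorem coreset_error_le_facility_location_general {ι : Type*}
    {E : Type*} [NormedAddCommGroup E] [NormedSpace ℝ E]
    (V : Finset ι) (v : ι → E) (S : Finset ι) (hS : S.Nonempty) :
    ∃ γ : ι → ℕ, (∑ j ∈ S, γ j = V.card) ∧
      ‖(∑ i ∈ V, v i) - ∑ j ∈ S, (γ j : ℝ) • v j‖ ≤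
        ∑ i ∈ V, S.inf' hS (fun j => ‖v i - v j‖) := by
  classical
  choose f hfS hf using fun i => S.exists_mem_eq_inf' hS fun j => ‖v i - v j‖
  have hmaps : (V : Set ι).MapsTo f S := fun i _ => hfS i
  refine ⟨fun j => #{i ∈ V | f i = j}, (card_eq_sum_card_fiberwise hmaps).symm, ?_⟩
  simp only [Nat.cast_smul_eq_nsmul, sum_card_fiberwise_nsmul_of_mapsTo hmaps]
  calc ‖∑ i ∈ V, v i - ∑ i ∈ V, v (f i)‖
      ≤ ∑ i ∈ V, ‖v i - v (f i)‖ := by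
        rw [← sum_sub_distrib]; exact norm_sum_le _ _
    _ = ∑ i ∈ V, S.inf' hS fun j => ‖v i - v j‖ := sum_congr rfl fun i _ => (hf i).symm

open Finset in
/-- (Gradient estimation error is bounded by the facility-location objective.)
Let `(v_i)_{i ∈ V}` be vectors in a real normed space indexed by a finite set `V`, and
let `S ⊆ V` be nonempty. Then there are nonnegative integer weights `(γ_j)_{j ∈ S}` with
`Σ_{j∈S} γ_j = |V|` such that
`‖Σ_{i∈V} v_i − Σ_{j∈S} γ_j v_j‖ ≤ Σ_{i∈V} min_{j∈S} ‖v_i − v_j‖`. -/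
theorem coreset_error_le_facility_location {ι : Type*} [DecidableEq ι]
    {E : Type*} [NormedAddCommGroup E] [NormedSpace ℝ E]
    (V : Finset ι) (v : ι → E) (S : Finset ι) (hSV : S ⊆ V) (hS : S.Nonempty) :
    ∃ γ : ι → ℕ, (∑ j ∈ S, γ j = V.card) ∧
      ‖(∑ i ∈ V, v i) - ∑ j ∈ S, (γ j : ℝ) • v j‖ ≤
        ∑ i ∈ V, S.inf' hS (fun j => ‖v i - v j‖) :=
  coreset_error_le_facility_location_general V v S hS
end

section
/- (Preconditioned gradient difference bound for ridge regression.) Let x_i, x_j, w ∈ ℝ^d, y_i, y_j ∈ ℝ, λ ≥ 0, and let A, B be real d×d matrices. For the ridge regression losses f_i(w) = (1/2)(⟨x_i, w⟩ − y_i)² + (λ/2)‖w‖², whose gradients are ∇f_i(w) = x_i(⟨x_i, w⟩ − y_i) + λw, the following identity and inequality hold: A∇f_i(w) − B∇f_j(w) = (⟨x_i,w⟩ − y_i)(Ax_i − Bx_j) + (⟨x_i − x_j, w⟩ + y_j − y_i) Bx_j + λ(A − B)w, and therefore ‖A∇f_i(w) − B∇f_j(w)‖ ≤ |⟨x_i,w⟩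 − y_i| (‖A − B‖‖x_i‖ + ‖B‖‖x_i − x_j‖) + |⟨x_i − x_j, w⟩ + y_j − y_i| ‖Bx_j‖ + λ‖(A − B)w‖. -/
open scoped RealInnerProductSpace

/-- The operator norm of a real matrix, induced by the Euclidean norm. -/
noncomputable def opNorm {m n : ℕ} (M : Matrix (Fin m) (Fin n) ℝ) : ℝ :=
  ‖LinearMap.toContinuousLinearMap (Matrix.toEuclideanLin M)‖

theorem LinearMap.apply_smul_add_sub_apply_smul_add {R M N : Type*} [CommRing R]
    [AddCommGroup M] [Module R M] [AddCommGroup N] [Module R N]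
    (f g : M →ₗ[R] N) (a b c : R) (x y w : M) :
    f (a • x + c • w) - g (b • y + c • w) =
      a • (f x - g y) + (a - b) • g y + c • (f - g) w := by
  simp only [map_add, map_smul, LinearMap.sub_apply]
  module

theorem ContinuousLinearMap.norm_apply_sub_apply_le {𝕜 E F : Type*}
    [NontriviallyNormedField 𝕜] [SeminormedAddCommGroup E] [SeminormedAddCommGroup F]
    [NormedSpace 𝕜 E] [NormedSpace 𝕜 F] (f g : E →L[𝕜] F) (x y : E) :
    ‖f x - g y‖ ≤ ‖f - g‖ * ‖x‖ + ‖g‖ * ‖x - y‖ := by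
  have hsplit : f x - g y = (f - g) x + g (x - y) := by
    simp only [sub_apply, map_sub]
    abel
  rw [hsplit]
  exact (norm_add_le _ _).trans (add_le_add ((f - g).le_opNorm x) (g.le_opNorm (x - y)))

theorem norm_toEuclideanLin_apply_sub_apply_le {m n : ℕ} (A B : Matrix (Fin m) (Fin n) ℝ)
    (x y : EuclideanSpace ℝ (Fin n)) :
    ‖Matrix.toEuclideanLin A x - Matrix.toEuclideanLin B y‖ ≤
      opNorm (A - B) * ‖x‖ + opNorm B * ‖x - y‖ := by
  simpa only [opNorm, map_sub, LinearMap.coe_toContinuousLinearMap'] using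
    (LinearMap.toContinuousLinearMap (Matrix.toEuclideanLin A)).norm_apply_sub_apply_le
      (LinearMap.toContinuousLinearMap (Matrix.toEuclideanLin B)) x y

/-- (Preconditioned gradient difference bound for ridge regression.)
For ridge losses `f_i(w) = (1/2)(⟨x_i,w⟩ − y_i)² + (λ/2)‖w‖²` with gradients
`∇f_i(w) = (⟨x_i,w⟩ − y_i) x_i + λw`, and matrices `A`, `B`:
`A∇f_i(w) − B∇f_j(w) = (⟨x_i,w⟩ − y_i)(Ax_i − Bx_j)
  + (⟨x_i − x_j, w⟩ + y_j − y_i) Bx_j + λ(A − B)w`, and hence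
`‖A∇f_i(w) − B∇f_j(w)‖ ≤ |⟨x_i,w⟩ − y_i| (‖A − B‖‖x_i‖ + ‖B‖‖x_i − x_j‖)
  + |⟨x_i − x_j, w⟩ + y_j − y_i| ‖Bx_j‖ + λ‖(A − B)w‖`. -/
theorem ridge_preconditioned_grad_diff_bound {d : ℕ}
    (xi xj w : EuclideanSpace ℝ (Fin d)) (yi yj lam : ℝ) (hlam : 0 ≤ lam)
    (A B : Matrix (Fin d) (Fin d) ℝ)
    (gi gj : EuclideanSpace ℝ (Fin d))
    (hgi : gi = (⟪xi, w⟫ - yi) • xi + lam • w)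
    (hgj : gj = (⟪xj, w⟫ - yj) • xj + lam • w) :
    Matrix.toEuclideanLin A gi - Matrix.toEuclideanLin B gj =
      (⟪xi, w⟫ - yi) • (Matrix.toEuclideanLin A xi - Matrix.toEuclideanLin B xj) +
      (⟪xi - xj, w⟫ + yj - yi) • Matrix.toEuclideanLin B xj +
      lam • Matrix.toEuclideanLin (A - B) w ∧
    ‖Matrix.toEuclideanLin A gi - Matrix.toEuclideanLin B gj‖ ≤
      |⟪xi, w⟫ - yi| * (opNorm (A - B) * ‖xi‖ + opNorm B * ‖xi - xj‖) +
      |⟪xi - xj, w⟫ + yj - yi| * ‖Matrix.toEuclideanLin B xj‖ +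
      lam * ‖Matrix.toEuclideanLin (A - B) w‖ := by
  have hresidual : ⟪xi - xj, w⟫ + yj - yi = (⟪xi, w⟫ - yi) - (⟪xj, w⟫ - yj) := by
    rw [inner_sub_left]
    ring
  have hsplit : Matrix.toEuclideanLin A gi - Matrix.toEuclideanLin B gj =
      (⟪xi, w⟫ - yi) • (Matrix.toEuclideanLin A xi - Matrix.toEuclideanLin B xj) +
      (⟪xi - xj, w⟫ + yj - yi) • Matrix.toEuclideanLin B xj +
      lam • Matrix.toEuclideanLin (A - B) w := by
    rw [hgi, hgj, hresidual, map_sub, LinearMap.apply_smul_add_sub_apply_smul_add]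
  refine ⟨hsplit, ?_⟩
  rw [hsplit]
  refine norm_add₃_le.trans ?_
  rw [norm_smul, norm_smul, Real.norm_eq_abs, Real.norm_eq_abs, norm_smul_of_nonneg hlam]
  gcongr
  exact norm_toEuclideanLin_apply_sub_apply_le A B xi xj
end
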